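/- arXiv:2511.06566 — 4 statements merged into one kernel-verified Lean document; each statement's English description precedes it below -/
import Mathlib

section
/- Let W be an n×n complex symmetric matrix with positive semidefinite real part such that ε²Id + 2W is invertible for ε > 0. Then the n-dimensional Gaussian integral ∫_{ℝⁿ} exp(2i t·x) exp(−tᵀ(ε²Id + 2W)t) dt equals (πⁿ / det(ε²Id + 2W))^{1/2} · exp(−xᵀ(ε²Id + 2W)⁻¹ x) for every x ∈ ℂⁿ, where the square root of the determinant is taken with the branch continuous in W from W = 0. -/
/-!
Write `M = ε² + 2W`. Its real part `ε² + 2R` is positive definite and its imaginary part `2 Im` is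
symmetric, so one real congruence `t = S u` turns the real part into the identity and the
imaginary part into a diagonal matrix `diag d`. Then `SᵀMS = diag (1 + i d)`, and the integral
factors into one-dimensional complex Gaussians:
`∫ = |det S| ∏ⱼ (π / (1 + i dⱼ))^{1/2} exp(-xᵀM⁻¹x)`, whose squared prefactor is `πⁿ / det M`.

Along the path `M_s = ε² + 2sW` the prefactor is `(∫ exp(2i t·x - tᵀM_s t) dt) · exp(xᵀM_s⁻¹x)`,
which is continuous in `s` by dominated convergence (`Re M_s ⪰ ε²` uniformly) and equals the
positive root `(π/ε²)^{n/2}` at `s = 0`.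
-/

open MeasureTheory Matrix Complex Finset
open scoped Real

section GaussianIntegrand

variable {ι : Type*} [Fintype ι]

theorem Matrix.dotProduct_mulVec_eq_sum_sum {R : Type*} [CommSemiring R] (A : Matrix ι ι R)
    (v w : ι → R) : v ⬝ᵥ A *ᵥ w = ∑ i, ∑ j, v i * A i j * w j := by
  simp only [dotProduct, mulVec, mul_sum, mul_assoc]

theorem Matrix.re_ofReal_dotProduct_mulVec (P Q : Matrix ι ι ℝ) (t : ι → ℝ) :
    ((ofReal ∘ t) ⬝ᵥ (P.map ofReal + I • Q.map ofReal) *ᵥ (ofReal ∘ t)).re = t ⬝ᵥ P *ᵥ t := by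
  simp [dotProduct, mulVec, Complex.mul_re, Finset.mul_sum]

theorem Matrix.re_ofReal_dotProduct_mulVec_le {P P' Q Q' : Matrix ι ι ℝ}
    (h : (P' - P).PosSemidef) (t : ι → ℝ) :
    ((ofReal ∘ t) ⬝ᵥ (P.map ofReal + I • Q.map ofReal) *ᵥ (ofReal ∘ t)).re
      ≤ ((ofReal ∘ t) ⬝ᵥ (P'.map ofReal + I • Q'.map ofReal) *ᵥ (ofReal ∘ t)).re := by
  have := h.dotProduct_mulVec_nonneg t
  rw [star_trivial, sub_mulVec, dotProduct_sub, sub_nonneg] at this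
  rwa [re_ofReal_dotProduct_mulVec, re_ofReal_dotProduct_mulVec]

noncomputable def gaussianIntegrand (M : Matrix ι ι ℂ) (x : ι → ℂ) (t : ι → ℝ) : ℂ :=
  cexp (2 * I * ((ofReal ∘ t) ⬝ᵥ x) - (ofReal ∘ t) ⬝ᵥ M *ᵥ (ofReal ∘ t))

theorem continuous_gaussianIntegrand (M : Matrix ι ι ℂ) (x : ι → ℂ) :
    Continuous (gaussianIntegrand M x) := by
  unfold gaussianIntegrand
  simp only [dotProduct, Function.comp_apply]
  fun_prop

theorem gaussianIntegrand_mulVec (M : Matrix ι ι ℂ) (S : Matrix ι ι ℝ) (x : ι → ℂ) (u : ι → ℝ) :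
    gaussianIntegrand M x (S *ᵥ u)
      = gaussianIntegrand ((S.map ofReal)ᵀ * M * S.map ofReal) ((S.map ofReal)ᵀ *ᵥ x) u := by
  have hmap : ofReal ∘ (S *ᵥ u) = S.map ofReal *ᵥ (ofReal ∘ u) := by
    ext i; exact RingHom.map_mulVec ofRealHom S u i
  have htr : ∀ w, (ofReal ∘ u) ⬝ᵥ (S.map ofReal)ᵀ *ᵥ w = S.map ofReal *ᵥ (ofReal ∘ u) ⬝ᵥ w :=
    fun w => by rw [dotProduct_mulVec, vecMul_transpose]
  rw [gaussianIntegrand, gaussianIntegrand, hmap, ← mulVec_mulVec, ← mulVec_mulVec, htr, htr]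

theorem norm_gaussianIntegrand_le {M N : Matrix ι ι ℂ} (x : ι → ℂ) {t : ι → ℝ}
    (h : ((ofReal ∘ t) ⬝ᵥ N *ᵥ (ofReal ∘ t)).re ≤ ((ofReal ∘ t) ⬝ᵥ M *ᵥ (ofReal ∘ t)).re) :
    ‖gaussianIntegrand M x t‖ ≤ ‖gaussianIntegrand N x t‖ := by
  simp only [gaussianIntegrand, norm_exp, sub_re, Real.exp_le_exp]
  linarith

theorem continuousOn_integral_gaussianIntegrand {X : Type*} [TopologicalSpace X]
    [FirstCountableTopology X]
    {M : X → Matrix ι ι ℂ} (hM : Continuous M) {K : Set X} {N : Matrix ι ι ℂ} {x : ι → ℂ}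
    (hN : Integrable (gaussianIntegrand N x))
    (hle : ∀ s ∈ K, ∀ t : ι → ℝ,
      ((ofReal ∘ t) ⬝ᵥ N *ᵥ (ofReal ∘ t)).re ≤ ((ofReal ∘ t) ⬝ᵥ M s *ᵥ (ofReal ∘ t)).re) :
    ContinuousOn (fun s => ∫ t, gaussianIntegrand (M s) x t) K :=
  continuousOn_of_dominated (fun _ _ => (continuous_gaussianIntegrand _ x).aestronglyMeasurable)
    (fun s hs => ae_of_all _ fun _ => norm_gaussianIntegrand_le x (hle s hs _)) hN.norm
    (ae_of_all _ fun t => by unfold gaussianIntegrand; fun_prop)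

variable [DecidableEq ι]

theorem integral_comp_mulVec {E : Type*} [NormedAddCommGroup E] [NormedSpace ℝ E]
    {S : Matrix ι ι ℝ} (hS : S.det ≠ 0) (f : (ι → ℝ) → E) :
    ∫ u, f (S *ᵥ u) = |S.det|⁻¹ • ∫ t, f t := by
  have hS' : LinearMap.det (toLin' S) ≠ 0 := by rwa [LinearMap.det_toLin']
  let e := ((toLin' S).equivOfDetNeZero hS').toContinuousLinearEquiv.toHomeomorph.toMeasurableEquiv
  have he : Measure.map e volume = Measure.map (toLin' S) volume := rfl
  calc ∫ u, f (S *ᵥ u) = ∫ u, f (e u) := rfl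
    _ = ∫ t, f t ∂(Measure.map e volume) := (integral_map_equiv e f).symm
    _ = |S.det|⁻¹ • ∫ t, f t := by
      rw [he, Real.map_matrix_volume_pi_eq_smul_volume_pi hS, integral_smul_measure,
        ENNReal.toReal_ofReal (abs_nonneg _), abs_inv]

theorem gaussianIntegrand_diagonal (b : ι → ℂ) (x : ι → ℂ) (t : ι → ℝ) :
    gaussianIntegrand (diagonal b) x t = cexp (-∑ i, b i * t i ^ 2 + ∑ i, (2 * I * x i) * t i) := by
  simp only [gaussianIntegrand, mulVec_diagonal, dotProduct, Function.comp_apply, mul_sum]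
  congr 1
  rw [sub_eq_neg_add]
  congr 1
  · simp only [← sum_neg_distrib]; exact sum_congr rfl fun i _ => by ring
  · exact sum_congr rfl fun i _ => by ring

theorem integrable_gaussianIntegrand_diagonal {b : ι → ℂ} (hb : ∀ i, 0 < (b i).re)
    (x : ι → ℂ) : Integrable (gaussianIntegrand (diagonal b) x) := by
  simp only [funext (gaussianIntegrand_diagonal b x)]
  exact GaussianFourier.integrable_cexp_neg_sum_mul_add hb _

theorem integral_gaussianIntegrand_diagonal {b : ι → ℂ} (hb : ∀ i, 0 < (b i).re)
    (x : ι → ℂ) :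
    ∫ t, gaussianIntegrand (diagonal b) x t
      = (∏ i, (π / b i) ^ (1 / 2 : ℂ)) * cexp (-(x ⬝ᵥ (diagonal b)⁻¹ *ᵥ x)) := by
  have hinv : (diagonal b)⁻¹ = diagonal fun i => (b i)⁻¹ :=
    inv_eq_left_inv (by simp [diagonal_mul_diagonal, inv_mul_cancel₀ (ne_zero_of_re_pos (hb _))])
  rw [funext (gaussianIntegrand_diagonal b x), GaussianFourier.integral_cexp_neg_sum_mul_add hb,
    prod_mul_distrib, ← Complex.exp_sum, hinv]
  simp only [dotProduct, mulVec_diagonal, ← sum_neg_distrib]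
  congr 2
  refine sum_congr rfl fun i _ => ?_
  rw [mul_pow, mul_pow, I_sq]
  field_simp [ne_zero_of_re_pos (hb i)]
  ring

theorem integral_gaussianIntegrand_smul_one {a : ℝ} (ha : 0 < a) (x : ι → ℂ) :
    ∫ t, gaussianIntegrand ((a : ℂ) • 1) x t
      = Real.sqrt (π ^ Fintype.card ι / a ^ Fintype.card ι)
        * cexp (-(x ⬝ᵥ ((a : ℂ) • 1)⁻¹ *ᵥ x)) := by
  rw [smul_one_eq_diagonal, integral_gaussianIntegrand_diagonal fun _ => by simpa using ha,
    prod_const, card_univ, ← div_pow, Real.sqrt_eq_rpow, ← Real.rpow_pow_comm (by positivity),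
    ofReal_pow, ofReal_cpow (by positivity)]
  norm_num

theorem integral_gaussianIntegrand_of_transpose_mul_mul_eq_diagonal {M : Matrix ι ι ℂ}
    {S : Matrix ι ι ℝ} {b : ι → ℂ} (hb : ∀ i, 0 < (b i).re)
    (hMS : (S.map ofReal)ᵀ * M * S.map ofReal = diagonal b) (x : ι → ℂ) :
    ∫ t, gaussianIntegrand M x t
      = (|S.det| * ∏ i, (π / b i) ^ (1 / 2 : ℂ)) * cexp (-(x ⬝ᵥ M⁻¹ *ᵥ x)) := by
  set T := S.map ofReal
  have hdet : (T.det) ^ 2 * M.det = ∏ i, b i := by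
    rw [← det_diagonal, ← hMS, det_mul, det_mul, det_transpose]; ring
  have hprod : ∏ i, b i ≠ 0 := prod_ne_zero_iff.mpr fun i _ => ne_zero_of_re_pos (hb i)
  have hTdet : T.det = S.det := (ofRealHom.map_det S).symm
  have hS : S.det ≠ 0 := fun h => hprod (by rw [← hdet, hTdet, h]; simp)
  have hT : IsUnit T.det := by rw [hTdet]; exact (ofReal_ne_zero.mpr hS).isUnit
  have hMinv : M⁻¹ = T * (diagonal b)⁻¹ * Tᵀ := by
    rw [← hMS, Matrix.mul_inv_rev, Matrix.mul_inv_rev, ← mul_assoc, ← mul_assoc,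
      mul_nonsing_inv _ hT, one_mul, mul_assoc, nonsing_inv_mul _ (by rwa [det_transpose]), mul_one]
  have hquad : x ⬝ᵥ M⁻¹ *ᵥ x = Tᵀ *ᵥ x ⬝ᵥ (diagonal b)⁻¹ *ᵥ (Tᵀ *ᵥ x) := by
    rw [hMinv, ← mulVec_mulVec, ← mulVec_mulVec, dotProduct_mulVec, ← mulVec_transpose]
  calc ∫ t, gaussianIntegrand M x t
      = |S.det| • ∫ u, gaussianIntegrand M x (S *ᵥ u) := by
        rw [integral_comp_mulVec hS, smul_smul, mul_inv_cancel₀ (abs_ne_zero.mpr hS), one_smul]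
    _ = |S.det| • ∫ u, gaussianIntegrand (diagonal b) (Tᵀ *ᵥ x) u := by
        simp only [gaussianIntegrand_mulVec, hMS, T]
    _ = _ := by
        rw [integral_gaussianIntegrand_diagonal hb, hquad, Complex.real_smul, mul_assoc]

open scoped MatrixOrder in
theorem Matrix.PosDef.exists_transpose_mul_mul_eq_one_and_diagonal {P Q : Matrix ι ι ℝ}
    (hP : P.PosDef) (hQ : Q.IsSymm) :
    ∃ S : Matrix ι ι ℝ, Sᵀ * P * S = 1 ∧ ∃ d : ι → ℝ, Sᵀ * Q * S = diagonal d := by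
  obtain ⟨B, hB⟩ := CStarAlgebra.nonneg_iff_eq_star_mul_self.mp hP.posSemidef.nonneg
  rw [star_eq_conjTranspose, conjTranspose_eq_transpose_of_trivial] at hB
  have hBu : IsUnit B.det := by
    refine isUnit_iff_ne_zero.mpr fun h => hP.det_pos.ne' ?_
    rw [hB, det_mul, h, mul_zero]
  have hQ₁ : (B⁻¹ᵀ * Q * B⁻¹).IsHermitian := by
    rw [isHermitian_iff_isSymm]
    simp [IsSymm, transpose_mul, hQ.eq, Matrix.mul_assoc]
  set U : Matrix ι ι ℝ := (hQ₁.eigenvectorUnitary : Matrix ι ι ℝ)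
  have hU : Uᵀ * U = 1 := by
    rw [← conjTranspose_eq_transpose_of_trivial, ← star_eq_conjTranspose]
    exact Unitary.coe_star_mul_self _
  have hBB : B⁻¹ᵀ * Bᵀ = 1 := by rw [← transpose_mul, mul_nonsing_inv _ hBu, transpose_one]
  refine ⟨B⁻¹ * U, ?_, RCLike.ofReal ∘ hQ₁.eigenvalues, ?_⟩
  · calc (B⁻¹ * U)ᵀ * P * (B⁻¹ * U) = Uᵀ * (B⁻¹ᵀ * Bᵀ) * (B * B⁻¹) * U := by
          simp only [hB, transpose_mul, Matrix.mul_assoc]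
      _ = 1 := by rw [hBB, mul_nonsing_inv _ hBu, Matrix.mul_one, Matrix.mul_one, hU]
  · have h := hQ₁.conjStarAlgAut_star_eigenvectorUnitary
    rw [Unitary.conjStarAlgAut_apply, Unitary.coe_star, star_star, star_eq_conjTranspose,
      conjTranspose_eq_transpose_of_trivial] at h
    rw [← h, transpose_mul]
    simp only [U, Matrix.mul_assoc]

theorem exists_integral_gaussianIntegrand_eq {P Q : Matrix ι ι ℝ} (hP : P.PosDef) (hQ : Q.IsSymm) :
    ∃ c : ℂ, c ^ 2 * (P.map ofReal + I • Q.map ofReal).det = π ^ Fintype.card ι ∧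
      ∀ x, ∫ t, gaussianIntegrand (P.map ofReal + I • Q.map ofReal) x t
        = c * cexp (-(x ⬝ᵥ (P.map ofReal + I • Q.map ofReal)⁻¹ *ᵥ x)) := by
  obtain ⟨S, hSP, d, hSQ⟩ := hP.exists_transpose_mul_mul_eq_one_and_diagonal hQ
  set M := P.map ofReal + I • Q.map ofReal
  set T := S.map ofReal
  set b : ι → ℂ := fun i => 1 + I * d i
  have hb : ∀ i, 0 < (b i).re := fun i => by simp [b]
  have hmap : ∀ A : Matrix ι ι ℝ, Tᵀ * A.map ofReal * T = (Sᵀ * A * S).map ofReal := fun A => by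
    change _ = (Sᵀ * A * S).map ofRealHom
    rw [Matrix.map_mul, Matrix.map_mul, transpose_map]
    rfl
  have hMS : Tᵀ * M * T = diagonal b := by
    rw [Matrix.mul_add, Matrix.add_mul, Matrix.mul_smul, Matrix.smul_mul, hmap, hmap, hSP, hSQ]
    ext i j
    by_cases h : i = j <;> simp [b, h, one_apply]
  have hdet : T.det ^ 2 * M.det = ∏ i, b i := by
    rw [← det_diagonal, ← hMS, det_mul, det_mul, det_transpose]; ring
  have hTdet : T.det = S.det := (ofRealHom.map_det S).symm
  have hsqrt : ∀ z : ℂ, (z ^ (1 / 2 : ℂ)) ^ 2 = z := fun z => by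
    simp
  refine ⟨|S.det| * ∏ i, (π / b i) ^ (1 / 2 : ℂ), ?_,
    integral_gaussianIntegrand_of_transpose_mul_mul_eq_diagonal hb hMS⟩
  calc (|S.det| * ∏ i, (π / b i) ^ (1 / 2 : ℂ)) ^ 2 * M.det
      = (T.det ^ 2 * M.det) * ∏ i, (π / b i) := by
        rw [mul_pow, ← prod_pow, ← ofReal_pow, sq_abs, hTdet]
        simp only [hsqrt, ofReal_pow]
        ring
    _ = (π : ℂ) ^ Fintype.card ι := by
        rw [hdet, ← prod_mul_distrib, ← card_univ, ← prod_const]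
        exact prod_congr rfl fun i _ => mul_div_cancel₀ _ (ne_zero_of_re_pos (hb i))

theorem continuousOn_dotProduct_inv_mulVec {X : Type*} [TopologicalSpace X]
    {M : X → Matrix ι ι ℂ} (hM : Continuous M) {K : Set X} (hK : ∀ s ∈ K, (M s).det ≠ 0)
    (x : ι → ℂ) : ContinuousOn (fun s => x ⬝ᵥ (M s)⁻¹ *ᵥ x) K := by
  intro s hs
  have hinv : ContinuousAt (fun s => (M s)⁻¹) s := by
    refine (continuousAt_matrix_inv _ ?_).comp hM.continuousAt
    simpa [Ring.inverse_eq_inv'] using continuousAt_inv₀ (hK s hs)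
  have hquad : Continuous fun A : Matrix ι ι ℂ => x ⬝ᵥ A *ᵥ x :=
    continuous_const.dotProduct (continuous_id.matrix_mulVec continuous_const)
  exact (hquad.continuousAt.comp hinv).continuousWithinAt

end GaussianIntegrand

theorem complex_gaussian_integral_shifted_general
    {n : ℕ} (R Im : Matrix (Fin n) (Fin n) ℝ)
    (hIm : Im.IsSymm) (hRpsd : R.PosSemidef)
    (W : Matrix (Fin n) (Fin n) ℂ)
    (hW : W = R.map Complex.ofReal + Complex.I • Im.map Complex.ofReal)
    (ε : ℝ) (hε : 0 < ε) (x : Fin n → ℂ) :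
    ∃ d : ℂ,
      d ^ 2 = (Real.pi : ℂ) ^ n
          / (((ε : ℂ) ^ 2) • (1 : Matrix (Fin n) (Fin n) ℂ) + 2 • W).det ∧
      (∃ g : ℝ → ℂ, ContinuousOn g (Set.Icc 0 1) ∧
        (∀ s ∈ Set.Icc (0 : ℝ) 1,
          g s ^ 2 = (Real.pi : ℂ) ^ n
            / (((ε : ℂ) ^ 2) • (1 : Matrix (Fin n) (Fin n) ℂ) + ((2 * s : ℝ) : ℂ) • W).det) ∧
        g 0 = (Real.sqrt (Real.pi ^ n / (ε ^ 2) ^ n) : ℂ) ∧ g 1 = d) ∧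
      (∫ t : Fin n → ℝ,
          Complex.exp (2 * Complex.I * ∑ i, (t i : ℂ) * x i
            - ∑ i, ∑ j, (t i : ℂ)
                * ((((ε : ℂ) ^ 2) • (1 : Matrix (Fin n) (Fin n) ℂ) + 2 • W) i j)
                * (t j : ℂ)))
        = d * Complex.exp (- ∑ i, ∑ j,
            x i * (((((ε : ℂ) ^ 2) • (1 : Matrix (Fin n) (Fin n) ℂ) + 2 • W)⁻¹) i j) * x j) := by
  set M : ℝ → Matrix (Fin n) (Fin n) ℂ := fun s => ((ε : ℂ) ^ 2) • 1 + ((2 * s : ℝ) : ℂ) • W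
  have hM : ∀ s, M s = (ε ^ 2 • 1 + (2 * s) • R).map ofReal + I • ((2 * s) • Im).map ofReal := by
    intro s
    ext i j
    by_cases h : i = j <;> simp [M, hW, h, one_apply] <;> ring
  have hRs : ∀ s ∈ Set.Icc (0 : ℝ) 1, ((2 * s) • R).PosSemidef := fun s hs =>
    hRpsd.smul (by linarith [hs.1])
  have hc : ∀ s ∈ Set.Icc (0 : ℝ) 1, ∃ c : ℂ, c ^ 2 * (M s).det = π ^ n ∧
      ∀ x, ∫ t, gaussianIntegrand (M s) x t = c * cexp (-(x ⬝ᵥ (M s)⁻¹ *ᵥ x)) := fun s hs => by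
    have hP := (PosDef.one.smul (pow_pos hε 2)).add_posSemidef (hRs s hs)
    simpa only [hM, Fintype.card_fin] using exists_integral_gaussianIntegrand_eq hP (hIm.smul _)
  choose! c hc_sq hc_int using hc
  have hdet : ∀ s ∈ Set.Icc (0 : ℝ) 1, (M s).det ≠ 0 := fun s hs => right_ne_zero_of_mul <| by
    rw [hc_sq s hs]; exact pow_ne_zero n (ofReal_ne_zero.mpr Real.pi_ne_zero)
  set g : ℝ → ℂ := fun s => (∫ t, gaussianIntegrand (M s) x t) * cexp (x ⬝ᵥ (M s)⁻¹ *ᵥ x)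
  have hg : ∀ s ∈ Set.Icc (0 : ℝ) 1, g s = c s := fun s hs => by
    simp only [g, hc_int s hs, mul_assoc, ← Complex.exp_add, neg_add_cancel, Complex.exp_zero,
      mul_one]
  have hM0 : M 0 = ((ε ^ 2 : ℝ) : ℂ) • 1 := by simp [M]
  have hMc : Continuous M := by fun_prop
  have hcont : ContinuousOn g (Set.Icc 0 1) := by
    refine (continuousOn_integral_gaussianIntegrand hMc (N := M 0) ?_ fun s hs t => ?_).mul
      (continuous_exp.comp_continuousOn (continuousOn_dotProduct_inv_mulVec hMc hdet x))
    · rw [hM0, smul_one_eq_diagonal]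
      exact integrable_gaussianIntegrand_diagonal (fun _ => by rw [ofReal_re]; positivity) x
    · rw [hM, hM]
      exact re_ofReal_dotProduct_mulVec_le (by simpa using hRs s hs) t
  have hM1 : ((ε : ℂ) ^ 2) • (1 : Matrix (Fin n) (Fin n) ℂ) + 2 • W = M 1 := by
    simp [M, two_smul]
  have hIcc1 : (1 : ℝ) ∈ Set.Icc (0 : ℝ) 1 := ⟨zero_le_one, le_rfl⟩
  refine ⟨g 1, ?_, ⟨g, hcont, fun s hs => ?_, ?_, rfl⟩, ?_⟩
  · rw [hM1, hg 1 hIcc1, eq_div_iff (hdet 1 hIcc1), hc_sq 1 hIcc1]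
  · rw [hg s hs, eq_div_iff (hdet s hs), hc_sq s hs]
  · simp only [g, hM0, integral_gaussianIntegrand_smul_one (pow_pos hε 2), Fintype.card_fin,
      mul_assoc, ← Complex.exp_add, neg_add_cancel, Complex.exp_zero, mul_one]
  · simp only [hM1, ← dotProduct_mulVec_eq_sum_sum, hg 1 hIcc1]
    exact hc_int 1 hIcc1 x

/-- multivariate complex Gaussian integral
`∫ exp(2i t·x − tᵀ(ε²Id+2W)t) dt = √(πⁿ/det(ε²Id+2W)) exp(−xᵀ(ε²Id+2W)⁻¹x)`,
where the square root of the determinant is the branch continuous in `W`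
from `W = 0` (encoded by a continuous path of square roots along `s ↦ ε²Id + 2sW`). -/
theorem complex_gaussian_integral_shifted
    {n : ℕ} (R Im : Matrix (Fin n) (Fin n) ℝ)
    (hR : R.IsSymm) (hIm : Im.IsSymm) (hRpsd : R.PosSemidef)
    (W : Matrix (Fin n) (Fin n) ℂ)
    (hW : W = R.map Complex.ofReal + Complex.I • Im.map Complex.ofReal)
    (ε : ℝ) (hε : 0 < ε) (x : Fin n → ℂ) :
    ∃ d : ℂ,
      d ^ 2 = (Real.pi : ℂ) ^ n
          / (((ε : ℂ) ^ 2) • (1 : Matrix (Fin n) (Fin n) ℂ) + 2 • W).det ∧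
      (∃ g : ℝ → ℂ, ContinuousOn g (Set.Icc 0 1) ∧
        (∀ s ∈ Set.Icc (0 : ℝ) 1,
          g s ^ 2 = (Real.pi : ℂ) ^ n
            / (((ε : ℂ) ^ 2) • (1 : Matrix (Fin n) (Fin n) ℂ) + ((2 * s : ℝ) : ℂ) • W).det) ∧
        g 0 = (Real.sqrt (Real.pi ^ n / (ε ^ 2) ^ n) : ℂ) ∧ g 1 = d) ∧
      (∫ t : Fin n → ℝ,
          Complex.exp (2 * Complex.I * ∑ i, (t i : ℂ) * x i
            - ∑ i, ∑ j, (t i : ℂ)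
                * ((((ε : ℂ) ^ 2) • (1 : Matrix (Fin n) (Fin n) ℂ) + 2 • W) i j)
                * (t j : ℂ)))
        = d * Complex.exp (- ∑ i, ∑ j,
            x i * (((((ε : ℂ) ^ 2) • (1 : Matrix (Fin n) (Fin n) ℂ) + 2 • W)⁻¹) i j) * x j) :=
  complex_gaussian_integral_shifted_general R Im hIm hRpsd W hW ε hε x
end

section
/- Fix ε > 0 and complex numbers w with Re(w) ≥ 0 (the Feynman propagator value w_{↑↑}(A,A)), and write r = Re(w). Then the triple Gaussian integral (√(2/π³))·ε·∫_ℝ dq ∫_ℝ dt ∫_ℝ dt' exp(−ε²(t²+t'²) − 2iq(t−t') − 2ist) · exp(2i(t−t')·c) · exp(4tt'r − 2t²w − 2t'²w̄) equals exp(−s²/(2ε²)) for all real s and c. -/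
/-!
Integrate in the order `t'`, `t`, `q`: each step is a complex Gaussian integral
`∫ exp (-a x² + b x + d) dx = (π / a)^{1/2} exp (b² / 4a + d)` with `Re a > 0`.
Writing the exponent as `-α t² - β t'² + 4ρ t t' + …` with `α = ε² + 2w`, `β = ε² + 2w̄`, `ρ = Re w`,
the three leading coefficients are `β`, `(αβ - 4ρ²)/β` and `(α + β - 4ρ)/(αβ - 4ρ²)`, where
`αβ - 4ρ² = ε⁴ + 4ε² Re w + 4 (Im w)²` and `α + β - 4ρ = 2ε²` are real and positive.
The parameter `c` only enters through `q - c`, so it drops out by translation invariance in `q`.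
The exponent collapses to `-s²/(α + β - 4ρ)` and the prefactors to `√(π³ / 2ε²)`.
-/

open MeasureTheory Complex
open scoped Real ComplexConjugate

theorem Complex.mul_cpow_of_re_pos {x y : ℂ} (hx : 0 < x.re) (hy : 0 < y.re) (z : ℂ) :
    (x * y) ^ z = x ^ z * y ^ z := by
  have hx0 := ne_zero_of_re_pos hx
  have hy0 := ne_zero_of_re_pos hy
  obtain ⟨hx₁, hx₂⟩ := abs_lt.mp (abs_arg_lt_pi_div_two_iff.mpr (Or.inl hx))
  obtain ⟨hy₁, hy₂⟩ := abs_lt.mp (abs_arg_lt_pi_div_two_iff.mpr (Or.inl hy))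
  have harg : x.arg + y.arg ∈ Set.Ioc (-π) π := ⟨by linarith, by linarith⟩
  rw [cpow_def_of_ne_zero (mul_ne_zero hx0 hy0), cpow_def_of_ne_zero hx0,
    cpow_def_of_ne_zero hy0, log_mul hx0 hy0 harg, add_mul, exp_add]

theorem Complex.re_ofReal_div_pos {x : ℝ} {z : ℂ} (hx : 0 < x) (hz : 0 < z.re) :
    0 < ((x : ℂ) / z).re := by
  rw [div_eq_mul_inv, re_ofReal_mul, inv_re]
  exact mul_pos hx (div_pos hz (normSq_pos.mpr (ne_zero_of_re_pos hz)))

theorem integral_cexp_neg_quadratic {a : ℂ} (ha : 0 < a.re) (b d : ℂ) :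
    ∫ x : ℝ, cexp (-a * x ^ 2 + b * x + d) = (π / a) ^ (1 / 2 : ℂ) * cexp (b ^ 2 / (4 * a) + d) := by
  rw [integral_cexp_quadratic (by simpa using ha), neg_neg]
  congr 2
  ring

namespace DiscardIntegral

variable {α β ρ : ℂ}

theorem integral_dt' (hβ : 0 < β.re) (s u : ℂ) (t : ℝ) :
    ∫ t' : ℝ, cexp (-α * t ^ 2 - β * t' ^ 2 + 4 * ρ * t * t' - 2 * I * u * (t - t') - 2 * I * s * t)
      = (π / β) ^ (1 / 2 : ℂ) *
          cexp (-((α * β - 4 * ρ ^ 2) / β) * t ^ 2 - 2 * I * (u * (β - 2 * ρ) / β + s) * t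
            - u ^ 2 / β) := by
  have hβ0 := ne_zero_of_re_pos hβ
  have hquad (t' : ℝ) :
      -α * t ^ 2 - β * t' ^ 2 + 4 * ρ * t * t' - 2 * I * u * (t - t') - 2 * I * s * t
        = -β * t' ^ 2 + (2 * I * u + 4 * ρ * t) * t'
          + (-α * t ^ 2 - 2 * I * u * t - 2 * I * s * t) := by
    ring
  simp_rw [hquad, integral_cexp_neg_quadratic hβ]
  congr 2
  simp only [add_sq, mul_pow, I_sq]
  field

theorem integral_dt (hM : 0 < ((α * β - 4 * ρ ^ 2) / β).re) (s u : ℂ) :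
    ∫ t : ℝ, cexp (-((α * β - 4 * ρ ^ 2) / β) * t ^ 2 - 2 * I * (u * (β - 2 * ρ) / β + s) * t
        - u ^ 2 / β)
      = (π * β / (α * β - 4 * ρ ^ 2)) ^ (1 / 2 : ℂ) *
          cexp (-((α + β - 4 * ρ) / (α * β - 4 * ρ ^ 2)) * u ^ 2
            - 2 * s * (β - 2 * ρ) / (α * β - 4 * ρ ^ 2) * u - s ^ 2 * β / (α * β - 4 * ρ ^ 2)) := by
  set M := α * β - 4 * ρ ^ 2 with hMdef
  obtain ⟨hM0, hβ0⟩ := div_ne_zero_iff.mp (ne_zero_of_re_pos hM)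
  have hquad (t : ℝ) :
      -(M / β) * t ^ 2 - 2 * I * (u * (β - 2 * ρ) / β + s) * t - u ^ 2 / β
        = -(M / β) * t ^ 2 + (-2 * I * (u * (β - 2 * ρ) / β + s)) * t + -(u ^ 2 / β) := by
    ring
  simp_rw [hquad, integral_cexp_neg_quadratic hM, div_div_eq_mul_div]
  congr 2
  simp only [mul_pow, neg_sq, I_sq]
  field_simp
  rw [hMdef]
  ring

theorem integral_dq (he : 0 < ((α + β - 4 * ρ) / (α * β - 4 * ρ ^ 2)).re) (s : ℂ) :
    ∫ q : ℝ, cexp (-((α + β - 4 * ρ) / (α * β - 4 * ρ ^ 2)) * q ^ 2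
        - 2 * s * (β - 2 * ρ) / (α * β - 4 * ρ ^ 2) * q - s ^ 2 * β / (α * β - 4 * ρ ^ 2))
      = (π * (α * β - 4 * ρ ^ 2) / (α + β - 4 * ρ)) ^ (1 / 2 : ℂ) *
          cexp (-s ^ 2 / (α + β - 4 * ρ)) := by
  set M := α * β - 4 * ρ ^ 2 with hMdef
  set e := α + β - 4 * ρ with hedef
  obtain ⟨he0, hM0⟩ := div_ne_zero_iff.mp (ne_zero_of_re_pos he)
  have hquad (q : ℝ) :
      -(e / M) * q ^ 2 - 2 * s * (β - 2 * ρ) / M * q - s ^ 2 * β / M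
        = -(e / M) * q ^ 2 + (-(2 * s * (β - 2 * ρ) / M)) * q + -(s ^ 2 * β / M) := by
    ring
  simp_rw [hquad, integral_cexp_neg_quadratic he, div_div_eq_mul_div]
  congr 2
  field_simp
  rw [hMdef, hedef]
  ring

theorem integral_integral_integral_eq (hβ : 0 < β.re) (hM : 0 < ((α * β - 4 * ρ ^ 2) / β).re)
    (he : 0 < ((α + β - 4 * ρ) / (α * β - 4 * ρ ^ 2)).re) (s : ℂ) (c : ℝ) :
    ∫ q : ℝ, ∫ t : ℝ, ∫ t' : ℝ,
        cexp (-α * t ^ 2 - β * t' ^ 2 + 4 * ρ * t * t' - 2 * I * (q - c) * (t - t') - 2 * I * s * t)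
      = (π / β) ^ (1 / 2 : ℂ) * (π * β / (α * β - 4 * ρ ^ 2)) ^ (1 / 2 : ℂ) *
          (π * (α * β - 4 * ρ ^ 2) / (α + β - 4 * ρ)) ^ (1 / 2 : ℂ) *
            cexp (-s ^ 2 / (α + β - 4 * ρ)) := by
  simp_rw [integral_dt' hβ, integral_const_mul, integral_dt hM]
  have hshift := integral_sub_right_eq_self (μ := volume)
    (fun q : ℝ => cexp (-((α + β - 4 * ρ) / (α * β - 4 * ρ ^ 2)) * q ^ 2
      - 2 * s * (β - 2 * ρ) / (α * β - 4 * ρ ^ 2) * q - s ^ 2 * β / (α * β - 4 * ρ ^ 2))) c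
  push_cast at hshift
  rw [integral_const_mul, hshift, integral_dq he]
  ring

theorem prefactor_eq_sqrt (hβ : 0 < β.re) {m e : ℝ} (hm : 0 < m) (he : 0 < e) :
    (π / β) ^ (1 / 2 : ℂ) * (π * β / m) ^ (1 / 2 : ℂ) * (π * m / e) ^ (1 / 2 : ℂ)
      = (√(π ^ 3 / e) : ℝ) := by
  have hβ0 := ne_zero_of_re_pos hβ
  have hπβ : 0 < (π * β / m).re := by
    rw [div_ofReal_re, re_ofReal_mul]
    positivity
  have hprod : π / β * (π * β / m) = ((π ^ 2 / m : ℝ) : ℂ) := by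
    push_cast
    field_simp
  have hπm : ((π * m / e : ℝ) : ℂ) = π * m / e := by push_cast; ring
  rw [← mul_cpow_of_re_pos (re_ofReal_div_pos Real.pi_pos hβ) hπβ, hprod, ← hπm,
    ← mul_cpow_of_re_pos (by rw [ofReal_re]; positivity) (by rw [ofReal_re]; positivity),
    ← ofReal_mul, show (1 / 2 : ℂ) = ((1 / 2 : ℝ) : ℂ) by push_cast; rfl,
    ← ofReal_cpow (by positivity), Real.sqrt_eq_rpow]
  congr 2
  field_simp

end DiscardIntegral

open DiscardIntegral in
/-- the triple Gaussian (discard) integral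
`√(2/π³) ε ∫dq ∫dt ∫dt' exp(−ε²(t²+t'²) − 2iq(t−t') − 2ist)
   exp(2i(t−t')c) exp(4tt'r − 2t²w − 2t'²w̄) = exp(−s²/(2ε²))`,
with `r = Re w ≥ 0`, for all real `s`, `c`. -/
theorem discard_triple_gaussian_integral
    (ε s c : ℝ) (hε : 0 < ε) (w : ℂ) (hw : 0 ≤ w.re) :
    ((Real.sqrt (2 / Real.pi ^ 3) : ℝ) : ℂ) * (ε : ℂ) *
        ∫ q : ℝ, ∫ t : ℝ, ∫ t' : ℝ,
          Complex.exp (-(ε : ℂ) ^ 2 * ((t : ℂ) ^ 2 + (t' : ℂ) ^ 2)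
              - 2 * Complex.I * (q : ℂ) * ((t : ℂ) - (t' : ℂ))
              - 2 * Complex.I * (s : ℂ) * (t : ℂ)) *
          Complex.exp (2 * Complex.I * ((t : ℂ) - (t' : ℂ)) * (c : ℂ)) *
          Complex.exp (4 * (t : ℂ) * (t' : ℂ) * (w.re : ℂ)
              - 2 * (t : ℂ) ^ 2 * w - 2 * (t' : ℂ) ^ 2 * (starRingEnd ℂ w))
      = Complex.exp (-((s ^ 2 / (2 * ε ^ 2) : ℝ) : ℂ)) := by
  set α : ℂ := ε ^ 2 + 2 * w
  set β : ℂ := ε ^ 2 + 2 * conj w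
  set m : ℝ := ε ^ 4 + 4 * ε ^ 2 * w.re + 4 * w.im ^ 2
  have hintegrand (q t t' : ℝ) :
      cexp (-(ε : ℂ) ^ 2 * ((t : ℂ) ^ 2 + (t' : ℂ) ^ 2) - 2 * I * q * (t - t') - 2 * I * s * t) *
          cexp (2 * I * (t - t') * c) *
          cexp (4 * t * t' * w.re - 2 * t ^ 2 * w - 2 * t' ^ 2 * conj w)
        = cexp (-α * t ^ 2 - β * t' ^ 2 + 4 * w.re * t * t' - 2 * I * (q - c) * (t - t')
            - 2 * I * s * t) := by
    rw [← exp_add, ← exp_add]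
    simp only [α, β]
    ring_nf
  have hβ : 0 < β.re := by
    simp [β, ← ofReal_pow]
    positivity
  have hconj : conj w = 2 * w.re - w := by rw [eq_sub_iff_add_eq', add_conj]; push_cast; rfl
  have hdet : α * β - 4 * (w.re : ℂ) ^ 2 = m := by
    simp only [α, β, m, hconj]
    push_cast
    linear_combination (-4 * (w.im : ℂ) ^ 2) * I_sq - 4 * (w - w.re + w.im * I) * (re_add_im w).symm
  have htrace : α + β - 4 * (w.re : ℂ) = ((2 * ε ^ 2 : ℝ) : ℂ) := by
    simp only [α, β, hconj]
    push_cast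
    ring
  have hm : 0 < m := by positivity
  have hnorm : √(2 / π ^ 3) * ε * √(π ^ 3 / (2 * ε ^ 2)) = 1 := by
    rw [mul_right_comm, ← Real.sqrt_mul (by positivity),
      show 2 / π ^ 3 * (π ^ 3 / (2 * ε ^ 2)) = ε⁻¹ ^ 2 by field_simp,
      Real.sqrt_sq (by positivity), inv_mul_cancel₀ hε.ne']
  have hexp : -(s : ℂ) ^ 2 / ((2 * ε ^ 2 : ℝ) : ℂ) = -((s ^ 2 / (2 * ε ^ 2) : ℝ) : ℂ) := by
    push_cast
    ring
  simp_rw [hintegrand]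
  rw [integral_integral_integral_eq hβ (by rw [hdet]; exact re_ofReal_div_pos hm hβ)
      (by rw [hdet, htrace, ← ofReal_div, ofReal_re]; positivity),
    hdet, htrace, prefactor_eq_sqrt hβ hm (by positivity), hexp, ← mul_assoc, ← ofReal_mul,
    ← ofReal_mul, hnorm, ofReal_one, one_mul]
end

section
/- Setting s = 0 in the previous identity: for any ε > 0, c ∈ ℝ, and w ∈ ℂ with r := Re(w) ≥ 0, one has (√(2/π³))·ε·∫∫∫ exp(−ε²(t²+t'²) − 2iq(t−t')) exp(2i(t−t')c) exp(4tt'r − 2t²w − 2t'²w̄) dq dt dt' = 1. -/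
/-!
With `a = ε² + 2w`, the exponent is the quadratic form `-a t² + 4 (Re w) t t' - ā t'²` plus a
term linear in `t - t'`. Completing the square first in `t'` and then in `t` gives two complex
Gaussian integrals; since the form is Hermitian its determinant `|a|² - 4 (Re w)²` is real and
positive, and the two complex square roots combine to `π / √det`. The `q`-integrand is then the
real Gaussian `exp (-2ε² (q - c)² / det)`, whose integral cancels the prefactor.
-/

open MeasureTheory Complex Real ComplexConjugate

theorem Complex.ofReal_mul_cpow {x : ℝ} (hx : 0 < x) {z : ℂ} (hz : z ≠ 0) (s : ℂ) :
    ((x : ℂ) * z) ^ s = (x : ℂ) ^ s * z ^ s := by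
  have hx0 : (x : ℂ) ≠ 0 := ofReal_ne_zero.2 hx.ne'
  rw [cpow_def_of_ne_zero (mul_ne_zero hx0 hz), log_ofReal_mul hx hz, add_mul, exp_add,
    ofReal_log hx.le, ← cpow_def_of_ne_zero hx0, ← cpow_def_of_ne_zero hz]

theorem cpow_half_div_mul_cpow_half_div_div {z : ℂ} (hz : 0 < z.re) {x y : ℝ} (hx : 0 < x)
    (hy : 0 < y) :
    ((x : ℂ) / z) ^ (1 / 2 : ℂ) * ((x : ℂ) / ((y : ℂ) / z)) ^ (1 / 2 : ℂ) =
      ((x / √y : ℝ) : ℂ) := by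
  have hz0 : z ≠ 0 := by rintro rfl; simp at hz
  have hzπ : z.arg ≠ π := fun h => by linarith [(arg_eq_pi_iff.1 h).1]
  have hzs : z ^ (1 / 2 : ℂ) ≠ 0 := by simp [cpow_eq_zero_iff, hz0]
  rw [div_eq_mul_inv, div_div_eq_mul_div, mul_div_right_comm, ← ofReal_div,
    ofReal_mul_cpow hx (inv_ne_zero hz0), ofReal_mul_cpow (div_pos hx hy) hz0, inv_cpow _ _ hzπ,
    mul_mul_mul_comm, inv_mul_cancel₀ hzs, mul_one,
    ← mul_cpow_ofReal_nonneg hx.le (div_pos hx hy).le, ← ofReal_mul,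
    show (1 / 2 : ℂ) = ((1 / 2 : ℝ) : ℂ) by norm_num, ← ofReal_cpow (by positivity),
    ← Real.sqrt_eq_rpow, ← mul_div_assoc, ← sq, Real.sqrt_div' _ hy.le, Real.sqrt_sq hx.le]

theorem integral_cexp_neg_mul_sub_sq {β : ℝ} (hβ : 0 < β) (c : ℝ) :
    ∫ q : ℝ, cexp (-(β : ℂ) * ((q : ℂ) - c) ^ 2) = ((√(π / β) : ℝ) : ℂ) := by
  have hshift := integral_sub_right_eq_self (μ := volume)
    (fun q : ℝ => cexp (-(β : ℂ) * (q : ℂ) ^ 2)) c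
  push_cast at hshift
  rw [hshift, integral_gaussian_complex (by simpa using hβ), ← ofReal_div,
    show (1 / 2 : ℂ) = ((1 / 2 : ℝ) : ℂ) by norm_num, ← ofReal_cpow (by positivity),
    ← Real.sqrt_eq_rpow]

theorem integral_integral_cexp_quadratic {a b h p p' : ℂ} (hb : 0 < b.re)
    (hD : 0 < ((a * b - h ^ 2) / b).re) :
    ∫ t : ℝ, ∫ t' : ℝ, cexp (-a * t ^ 2 + 2 * h * t * t' - b * t' ^ 2 + p * t + p' * t') =
      (π / b) ^ (1 / 2 : ℂ) * (π / ((a * b - h ^ 2) / b)) ^ (1 / 2 : ℂ) *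
        cexp ((b * p ^ 2 + 2 * h * p * p' + a * p' ^ 2) / (4 * (a * b - h ^ 2))) := by
  set D := a * b - h ^ 2
  have hb0 : b ≠ 0 := by rintro rfl; simp at hb
  have hD0 : D ≠ 0 := by rintro hD'; simp [hD'] at hD
  have inner (t : ℝ) :
      ∫ t' : ℝ, cexp (-a * t ^ 2 + 2 * h * t * t' - b * t' ^ 2 + p * t + p' * t') =
        (π / b) ^ (1 / 2 : ℂ) *
          cexp (-(D / b) * t ^ 2 + (b * p + h * p') / b * t + p' ^ 2 / (4 * b)) := by
    calc _ = ∫ t' : ℝ, cexp (-b * t' ^ 2 + (2 * h * t + p') * t' + (-a * t ^ 2 + p * t)) := by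
          congr 1; ext t'; ring_nf
      _ = (π / b) ^ (1 / 2 : ℂ) *
            cexp (-a * t ^ 2 + p * t - (2 * h * t + p') ^ 2 / (4 * -b)) := by
          rw [integral_cexp_quadratic (by simpa using hb), neg_neg]
      _ = _ := by congr 2; field_simp; ring
  simp_rw [inner, integral_const_mul]
  rw [integral_cexp_quadratic (by simpa using hD), neg_neg, mul_assoc]
  congr 3
  field_simp
  simp only [D]
  ring

theorem normSq_sub_sq_pos {a : ℂ} {h : ℝ} (hah : |h| < a.re) : 0 < normSq a - h ^ 2 := by
  nlinarith [re_sq_le_normSq a, abs_nonneg h, sq_abs h]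

theorem integral_integral_cexp_quadratic_conj_sub {a : ℂ} {h : ℝ} (hah : |h| < a.re) (P : ℂ) :
    ∫ t : ℝ, ∫ t' : ℝ, cexp (-a * t ^ 2 + 2 * h * t * t' - conj a * t' ^ 2 - P * (t - t')) =
      ((π / √(normSq a - h ^ 2) : ℝ) : ℂ) *
        cexp (((a.re - h) / (2 * (normSq a - h ^ 2)) : ℝ) * P ^ 2) := by
  have hδ := normSq_sub_sq_pos hah
  have hD : a * conj a - (h : ℂ) ^ 2 = ((normSq a - h ^ 2 : ℝ) : ℂ) := by
    rw [mul_conj]; push_cast; ring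
  have hre : 0 < (conj a).re := by rw [conj_re]; linarith [abs_nonneg h]
  have hDre : 0 < (((normSq a - h ^ 2 : ℝ) : ℂ) / conj a).re := by
    rw [div_eq_mul_inv, re_ofReal_mul, inv_re]
    exact mul_pos hδ (div_pos hre (normSq_pos.2 fun h0 => by simp [h0] at hre))
  calc _ = ∫ t : ℝ, ∫ t' : ℝ,
        cexp (-a * t ^ 2 + 2 * h * t * t' - conj a * t' ^ 2 + -P * t + P * t') := by
        congr 1; ext t; congr 1; ext t'; ring_nf
    _ = _ := by
      rw [integral_integral_cexp_quadratic hre (by rwa [hD]), hD,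
        cpow_half_div_mul_cpow_half_div_div hre pi_pos hδ]
      congr 2
      have hsum := add_conj a
      generalize normSq a - h ^ 2 = δ at hδ ⊢
      have : (δ : ℂ) ≠ 0 := ofReal_ne_zero.2 hδ.ne'
      push_cast at hsum ⊢
      field_simp
      linear_combination (2 * P ^ 2) * hsum

/-- normalization (non-relativistic causality) of the
non-selective probe: the `s = 0` case of the discard integral equals `1`. -/
theorem discard_triple_gaussian_integral_norm
    (ε c : ℝ) (hε : 0 < ε) (w : ℂ) (hw : 0 ≤ w.re) :
    ((Real.sqrt (2 / Real.pi ^ 3) : ℝ) : ℂ) * (ε : ℂ) *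
        ∫ q : ℝ, ∫ t : ℝ, ∫ t' : ℝ,
          Complex.exp (-(ε : ℂ) ^ 2 * ((t : ℂ) ^ 2 + (t' : ℂ) ^ 2)
              - 2 * Complex.I * (q : ℂ) * ((t : ℂ) - (t' : ℂ))) *
          Complex.exp (2 * Complex.I * ((t : ℂ) - (t' : ℂ)) * (c : ℂ)) *
          Complex.exp (4 * (t : ℂ) * (t' : ℂ) * (w.re : ℂ)
              - 2 * (t : ℂ) ^ 2 * w - 2 * (t' : ℂ) ^ 2 * (starRingEnd ℂ w))
      = 1 := by
  set a : ℂ := (ε : ℂ) ^ 2 + 2 * w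
  have ha_re : a.re = ε ^ 2 + 2 * w.re := by simp [a, ← ofReal_pow]
  have hah : |2 * w.re| < a.re := by rw [abs_of_nonneg (by positivity), ha_re]; nlinarith
  have integrand (q t t' : ℝ) :
      cexp (-(ε : ℂ) ^ 2 * ((t : ℂ) ^ 2 + (t' : ℂ) ^ 2) - 2 * I * q * (t - t')) *
          cexp (2 * I * (t - t') * c) *
          cexp (4 * t * t' * w.re - 2 * (t : ℂ) ^ 2 * w - 2 * (t' : ℂ) ^ 2 * conj w) =
        cexp (-a * t ^ 2 + 2 * ((2 * w.re : ℝ) : ℂ) * t * t' - conj a * t' ^ 2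
          - 2 * I * (q - c) * (t - t')) := by
    rw [← Complex.exp_add, ← Complex.exp_add]
    congr 1
    simp only [a, map_add, map_mul, map_pow, conj_ofReal, map_ofNat]
    push_cast
    ring
  have hδ := normSq_sub_sq_pos hah
  simp_rw [integrand, integral_integral_cexp_quadratic_conj_sub hah, ha_re, add_sub_cancel_right]
  generalize normSq a - (2 * w.re) ^ 2 = δ at hδ ⊢
  have exponent (q : ℝ) : ((ε ^ 2 / (2 * δ) : ℝ) : ℂ) * (2 * I * (q - c)) ^ 2 =
      -((2 * ε ^ 2 / δ : ℝ) : ℂ) * ((q : ℂ) - c) ^ 2 := by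
    have : (δ : ℂ) ≠ 0 := ofReal_ne_zero.2 hδ.ne'
    push_cast
    field_simp
    linear_combination ((ε : ℂ) ^ 2 * ((q : ℂ) - c) ^ 2) * I_sq
  simp_rw [exponent, integral_const_mul,
    integral_cexp_neg_mul_sub_sq (by positivity : 0 < 2 * ε ^ 2 / δ)]
  have hπ := pi_pos
  have hconst : √(2 / π ^ 3) * ε * (π / √δ * √(π / (2 * ε ^ 2 / δ))) = 1 := by
    rw [← pow_left_inj₀ (by positivity) zero_le_one two_ne_zero, one_pow, mul_pow, mul_pow,
      mul_pow, div_pow, Real.sq_sqrt (by positivity), Real.sq_sqrt hδ.le,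
      Real.sq_sqrt (by positivity)]
    field_simp
  exact_mod_cast hconst
end

section
/- Let M be a complex symmetric n×n matrix whose Hermitian (real) part is positive definite. Then ∫_{ℝⁿ} exp(−tᵀ M t) dt converges absolutely and equals √(πⁿ / det M), where the square root is determined by analytic continuation from real positive definite M. -/
open MeasureTheory Matrix Complex

/-! Completing the square in the first coordinate, with `a = M₀₀`, integrates out `x` as the
one-dimensional Gaussian `√(π / a)` and leaves the Gaussian of the Schur complement of `a`, which is
again symmetric with positive definite real part and has determinant `det M / a`; by induction on
`n`, `(∫ exp (-tᵀ M t))² = πⁿ / det M`. Absolute convergence follows from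
`Re (tᵀ M t) = tᵀ A t ≥ c ‖t‖²`. The branch of the square root is the integral itself: along
`s ↦ A + i s B` the modulus of the integrand does not depend on `s`, so the integral is continuous
by dominated convergence, and at `s = 0` it is a positive real Gaussian integral. -/

def quadForm {ι : Type*} [Fintype ι] (M : Matrix ι ι ℂ) (t : ι → ℝ) : ℂ :=
  ∑ i, ∑ j, (t i : ℂ) * M i j * (t j : ℂ)

def RePosDef {ι : Type*} [Fintype ι] (M : Matrix ι ι ℂ) : Prop :=
  ∀ t : ι → ℝ, t ≠ 0 → 0 < (quadForm M t).re

theorem exists_pos_mul_norm_sq_le {E : Type*} [NormedAddCommGroup E] [NormedSpace ℝ E]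
    [FiniteDimensional ℝ E] {f : E → ℝ} (hf : Continuous f)
    (hsmul : ∀ (r : ℝ) x, f (r • x) = r ^ 2 * f x) (hpos : ∀ x ≠ 0, 0 < f x) :
    ∃ c > 0, ∀ x, c * ‖x‖ ^ 2 ≤ f x := by
  rcases subsingleton_or_nontrivial E with hE | hE
  · refine ⟨1, one_pos, fun x => ?_⟩
    simpa [Subsingleton.elim x 0] using (hsmul 0 0).ge
  obtain ⟨u, hu, hmin⟩ := (isCompact_sphere (0 : E) 1).exists_isMinOn
    (NormedSpace.sphere_nonempty.mpr zero_le_one) hf.continuousOn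
  refine ⟨f u, hpos u (ne_zero_of_mem_unit_sphere ⟨u, hu⟩), fun x => ?_⟩
  rcases eq_or_ne x 0 with rfl | hx
  · simpa using (hsmul 0 0).ge
  have hx' : ‖x‖⁻¹ • x ∈ Metric.sphere (0 : E) 1 := by simp [norm_smul, hx]
  calc f u * ‖x‖ ^ 2 ≤ f (‖x‖⁻¹ • x) * ‖x‖ ^ 2 := by gcongr; exact hmin hx'
    _ = f x := by rw [hsmul]; field_simp

theorem integral_fin_succ_cons {E : Type*} [NormedAddCommGroup E] [NormedSpace ℝ E] {n : ℕ}
    {f : (Fin (n + 1) → ℝ) → E} (hf : Integrable f) :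
    ∫ t, f t = ∫ y : Fin n → ℝ, ∫ x : ℝ, f (Fin.cons x y) := by
  have e := (volume_preserving_piFinSuccAbove (fun _ : Fin (n + 1) => ℝ) 0).symm
  have hcons : ∀ p : ℝ × (Fin n → ℝ),
      (MeasurableEquiv.piFinSuccAbove (fun _ => ℝ) 0).symm p = Fin.cons p.1 p.2 := fun p => by
    simp [MeasurableEquiv.piFinSuccAbove_symm_apply, Fin.insertNthEquiv, Fin.insertNth_zero']
  have hint := (e.integrable_comp_emb (MeasurableEquiv.measurableEmbedding _)).2 hf
  rw [← e.integral_comp']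
  rw [Measure.volume_eq_prod] at hint ⊢
  simp only [Function.comp_def, hcons] at hint ⊢
  exact integral_prod_symm _ hint

theorem re_sq_div_le {a β : ℂ} (ha : 0 < a.re) : (β ^ 2 / a).re ≤ β.re ^ 2 / a.re := by
  have hnorm : 0 < a.re * a.re + a.im * a.im :=
    add_pos_of_pos_of_nonneg (mul_pos ha ha) (mul_self_nonneg _)
  rw [div_re, normSq_apply, ← add_div, div_le_div_iff₀ hnorm ha]
  simp only [sq, mul_re, mul_im]
  nlinarith [sq_nonneg (β.re * a.im - β.im * a.re)]

section Schur

variable {K : Type*} [Field K] {n : ℕ}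

def schurComplement (M : Matrix (Fin (n + 1)) (Fin (n + 1)) K) : Matrix (Fin n) (Fin n) K :=
  of fun i j => M i.succ j.succ - M i.succ 0 * M 0 j.succ / M 0 0

theorem det_eq_mul_det_schurComplement {M : Matrix (Fin (n + 1)) (Fin (n + 1)) K}
    (h : M 0 0 ≠ 0) : M.det = M 0 0 * (schurComplement M).det := by
  set c : Fin (n + 1) → K := Fin.cons 0 fun i => M i.succ 0 / M 0 0
  set R : Matrix (Fin (n + 1)) (Fin (n + 1)) K := of fun i j => M i j - c i * M 0 j
  have hR0 : ∀ j, R 0 j = M 0 j := by simp [R, c]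
  have hdet : M.det = R.det :=
    det_eq_of_forall_row_eq_smul_add_const c 0 rfl fun i j => by simp [R, hR0]
  have hcol : ∀ i : Fin n, R i.succ 0 = 0 := fun i => by simp [R, c, h]
  rw [hdet, det_succ_column_zero, Fin.sum_univ_succ]
  simp only [hcol, hR0, mul_zero, zero_mul, Finset.sum_const_zero, add_zero, Fin.val_zero,
    pow_zero, one_mul, Fin.succAbove_zero]
  congr 2
  ext i j
  simp only [submatrix_apply, of_apply, Fin.cons_succ, schurComplement, sub_right_inj, R, c]
  ring

theorem Matrix.IsSymm.schurComplement {M : Matrix (Fin (n + 1)) (Fin (n + 1)) K} (hM : M.IsSymm) :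
    (schurComplement M).IsSymm :=
  IsSymm.ext fun i j => by simp [_root_.schurComplement, hM.apply, mul_comm]

end Schur

section QuadForm

variable {ι : Type*} [Fintype ι]

theorem quadForm_add (M N : Matrix ι ι ℂ) (t : ι → ℝ) :
    quadForm (M + N) t = quadForm M t + quadForm N t := by
  simp only [quadForm, Matrix.add_apply, mul_add, add_mul, Finset.sum_add_distrib]

theorem quadForm_smul (c : ℂ) (M : Matrix ι ι ℂ) (t : ι → ℝ) :
    quadForm (c • M) t = c * quadForm M t := by
  simp only [quadForm, Matrix.smul_apply, smul_eq_mul, Finset.mul_sum]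
  exact Finset.sum_congr rfl fun i _ => Finset.sum_congr rfl fun j _ => by ring

theorem quadForm_map_ofReal (A : Matrix ι ι ℝ) (t : ι → ℝ) :
    quadForm (A.map ofReal) t = ((t ⬝ᵥ A *ᵥ t : ℝ) : ℂ) := by
  simp [quadForm, dotProduct, mulVec, Finset.mul_sum, mul_assoc, mul_left_comm]

theorem quadForm_apply_smul (M : Matrix ι ι ℂ) (r : ℝ) (t : ι → ℝ) :
    quadForm M (r • t) = r ^ 2 * quadForm M t := by
  simp only [quadForm, Finset.mul_sum, Pi.smul_apply, smul_eq_mul, ofReal_mul]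
  exact Finset.sum_congr rfl fun i _ => Finset.sum_congr rfl fun j _ => by ring

theorem quadForm_single [DecidableEq ι] (M : Matrix ι ι ℂ) (i : ι) :
    quadForm M (Pi.single i 1) = M i i := by
  simp [quadForm, Pi.single_apply, apply_ite ofReal]

theorem continuous_quadForm (M : Matrix ι ι ℂ) : Continuous (quadForm M) := by
  unfold quadForm; fun_prop

theorem Matrix.PosDef.rePosDef_map_ofReal {A : Matrix ι ι ℝ} (hA : A.PosDef) :
    RePosDef (A.map ofReal) := fun t ht => by
  simpa [quadForm_map_ofReal] using hA.dotProduct_mulVec_pos ht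

theorem RePosDef.re_diag_pos {M : Matrix ι ι ℂ} (hM : RePosDef M) (i : ι) : 0 < (M i i).re := by
  classical
  simpa [quadForm_single] using hM (Pi.single i 1) (by simp)

theorem RePosDef.integrable_cexp_neg_quadForm {M : Matrix ι ι ℂ} (hM : RePosDef M) :
    Integrable fun t => cexp (-quadForm M t) := by
  obtain ⟨c, hc, hle⟩ := exists_pos_mul_norm_sq_le (E := EuclideanSpace ℝ ι)
    (f := fun x => (quadForm M x.ofLp).re)
    (continuous_re.comp ((continuous_quadForm M).comp (PiLp.continuous_ofLp 2 _)))
    (fun r x => by simp [quadForm_apply_smul, ← ofReal_pow])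
    (fun x hx => hM _ (by simpa using hx))
  refine (GaussianFourier.integrable_cexp_neg_mul_sum_add (b := c) (by simpa using hc) 0).mono
    ((continuous_quadForm M).neg.cexp.aestronglyMeasurable) (ae_of_all _ fun t => ?_)
  have hct := hle (WithLp.toLp 2 t)
  rw [EuclideanSpace.real_norm_sq_eq] at hct
  simp only [norm_exp, neg_re, Pi.zero_apply, zero_mul, Finset.sum_const_zero, add_zero]
  simp only [← ofReal_pow, ← ofReal_sum, ← ofReal_neg, ← ofReal_mul, ofReal_re] at hct ⊢
  exact Real.exp_le_exp.2 (by simpa using hct)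

end QuadForm

section ComplexPath

variable {ι : Type*}

def complexPath (A B : Matrix ι ι ℝ) (s : ℝ) : Matrix ι ι ℂ :=
  A.map ofReal + ((s : ℂ) * I) • B.map ofReal

theorem Matrix.IsSymm.complexPath {A B : Matrix ι ι ℝ} (hA : A.IsSymm) (hB : B.IsSymm) (s : ℝ) :
    (complexPath A B s).IsSymm :=
  (hA.map _).add ((hB.map _).smul _)

variable [Fintype ι]

theorem re_quadForm_complexPath (A B : Matrix ι ι ℝ) (s : ℝ) (t : ι → ℝ) :
    (quadForm (complexPath A B s) t).re = (quadForm (A.map ofReal) t).re := by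
  simp [complexPath, quadForm_add, quadForm_smul, quadForm_map_ofReal]

theorem RePosDef.complexPath {A : Matrix ι ι ℝ} (hA : RePosDef (A.map ofReal))
    (B : Matrix ι ι ℝ) (s : ℝ) : RePosDef (complexPath A B s) := fun t ht => by
  simpa [re_quadForm_complexPath] using hA t ht

theorem continuous_integral_cexp_neg_quadForm_complexPath {A : Matrix ι ι ℝ}
    (hA : RePosDef (A.map ofReal)) (B : Matrix ι ι ℝ) :
    Continuous fun s => ∫ t, cexp (-quadForm (complexPath A B s) t) := by
  refine continuous_of_dominated (bound := fun t => ‖cexp (-quadForm (A.map ofReal) t)‖)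
    (fun s => (hA.complexPath B s).integrable_cexp_neg_quadForm.aestronglyMeasurable)
    (fun s => ae_of_all _ fun t => by simp [norm_exp, re_quadForm_complexPath])
    hA.integrable_cexp_neg_quadForm.norm (ae_of_all _ fun t => ?_)
  simp only [complexPath, quadForm_add, quadForm_smul]
  fun_prop

end ComplexPath

section FirstCoordinate

variable {n : ℕ} {M : Matrix (Fin (n + 1)) (Fin (n + 1)) ℂ}

theorem quadForm_cons (hM : M.IsSymm) (x : ℝ) (y : Fin n → ℝ) :
    quadForm M (Fin.cons x y) = M 0 0 * (x : ℂ) ^ 2 + 2 * (∑ j, M 0 j.succ * (y j : ℂ)) * x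
      + quadForm (M.submatrix Fin.succ Fin.succ) y := by
  simp only [quadForm, Fin.sum_univ_succ, Fin.cons_zero, Fin.cons_succ, submatrix_apply,
    hM.apply 0, Finset.sum_add_distrib, Finset.mul_sum, Finset.sum_mul]
  have hcross : ∀ j : Fin n, 2 * (M 0 j.succ * (y j : ℂ)) * x
      = (y j : ℂ) * M 0 j.succ * x + x * M 0 j.succ * y j := fun j => by ring
  simp only [hcross, Finset.sum_add_distrib]
  ring

theorem quadForm_schurComplement (hM : M.IsSymm) (y : Fin n → ℝ) :
    quadForm (schurComplement M) y = quadForm (M.submatrix Fin.succ Fin.succ) y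
      - (∑ j, M 0 j.succ * (y j : ℂ)) ^ 2 / M 0 0 := by
  simp only [quadForm, schurComplement, of_apply, submatrix_apply, hM.apply 0, sq,
    Finset.sum_mul_sum, Finset.sum_div, ← Finset.sum_sub_distrib]
  exact Finset.sum_congr rfl fun i _ => Finset.sum_congr rfl fun j _ => by ring

theorem RePosDef.schurComplement (hM : M.IsSymm) (hpos : RePosDef M) :
    RePosDef (schurComplement M) := by
  intro y hy
  set a := M 0 0
  set β := ∑ j, M 0 j.succ * (y j : ℂ)
  have ha : 0 < a.re := hpos.re_diag_pos 0
  -- the real minimiser of `x ↦ (quadForm M (Fin.cons x y)).re`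
  set x := -β.re / a.re
  have hxy : (Fin.cons x y : Fin (n + 1) → ℝ) ≠ 0 := fun h =>
    hy (funext fun i => by simpa using congrFun h i.succ)
  have hcons := hpos _ hxy
  rw [quadForm_cons hM] at hcons
  simp only [add_re, ← ofReal_pow, mul_re, re_ofNat, im_ofNat, ofReal_re, ofReal_im,
    zero_mul, mul_zero, sub_zero] at hcons
  have hmin : a.re * x ^ 2 + 2 * β.re * x = -(β.re ^ 2 / a.re) := by
    simp only [x]; field_simp; ring
  rw [quadForm_schurComplement hM, sub_re]
  linarith [re_sq_div_le (β := β) ha]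

theorem integral_cexp_neg_quadForm_cons (hM : M.IsSymm) (ha : 0 < (M 0 0).re) (y : Fin n → ℝ) :
    ∫ x : ℝ, cexp (-quadForm M (Fin.cons x y))
      = (Real.pi / M 0 0) ^ (1 / 2 : ℂ) * cexp (-quadForm (schurComplement M) y) := by
  have hquad : ∀ x : ℝ, -quadForm M (Fin.cons x y) = -M 0 0 * (x : ℂ) ^ 2
      + -(2 * ∑ j, M 0 j.succ * (y j : ℂ)) * x + -quadForm (M.submatrix Fin.succ Fin.succ) y :=
    fun x => by rw [quadForm_cons hM]; ring
  have ha0 : M 0 0 ≠ 0 := fun h => by simp [h] at ha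
  simp_rw [hquad]
  rw [integral_cexp_quadratic (by simpa using ha), neg_neg, quadForm_schurComplement hM]
  congr 2
  field_simp
  ring

end FirstCoordinate

theorem RePosDef.sq_integral_cexp_neg_quadForm :
    ∀ {n : ℕ} {M : Matrix (Fin n) (Fin n) ℂ}, M.IsSymm → RePosDef M →
      (∫ t, cexp (-quadForm M t)) ^ 2 = (Real.pi : ℂ) ^ n / M.det
  | 0, M, _, _ => by simp [quadForm, measureReal_def, volume_pi]
  | n + 1, M, hM, hpos => by
    have ha := hpos.re_diag_pos 0
    have ha0 : M 0 0 ≠ 0 := fun h => by simp [h] at ha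
    rw [integral_fin_succ_cons hpos.integrable_cexp_neg_quadForm]
    simp_rw [integral_cexp_neg_quadForm_cons hM ha]
    rw [integral_const_mul, mul_pow, sq_integral_cexp_neg_quadForm hM.schurComplement
      (hpos.schurComplement hM), det_eq_mul_det_schurComplement ha0, one_div,
      cpow_ofNat_inv_pow, div_mul_div_comm, pow_succ']

theorem Matrix.PosDef.integral_cexp_neg_quadForm_map_ofReal {n : ℕ}
    {A : Matrix (Fin n) (Fin n) ℝ} (hA : A.PosDef) :
    ∫ t, cexp (-quadForm (A.map ofReal) t) = (√(Real.pi ^ n / A.det) : ℝ) := by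
  have hreal : ∫ t, cexp (-quadForm (A.map ofReal) t)
      = ((∫ t, Real.exp (-(t ⬝ᵥ A *ᵥ t)) : ℝ) : ℂ) := by
    simp_rw [quadForm_map_ofReal, ← ofReal_neg, ← ofReal_exp]
    exact integral_ofReal
  have hsq := hA.rePosDef_map_ofReal.sq_integral_cexp_neg_quadForm
    ((isHermitian_iff_isSymm.mp hA.isHermitian).map _)
  rw [hreal, show (A.map ofReal).det = A.det from (ofRealHom.map_det A).symm] at hsq
  rw [hreal, ← Real.sqrt_sq (integral_nonneg fun t => (Real.exp_pos _).le)]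
  congr 2
  exact_mod_cast hsq

theorem complex_gaussian_integral_general
    {n : ℕ} (A B : Matrix (Fin n) (Fin n) ℝ)
    (hA : A.PosDef) (hB : B.IsSymm)
    (M : Matrix (Fin n) (Fin n) ℂ)
    (hM : M = A.map Complex.ofReal + Complex.I • B.map Complex.ofReal) :
    Integrable (fun t : Fin n → ℝ =>
        Complex.exp (- ∑ i, ∑ j, (t i : ℂ) * M i j * (t j : ℂ))) ∧
    ∃ d : ℂ, d ^ 2 = (Real.pi : ℂ) ^ n / M.det ∧
      (∃ g : ℝ → ℂ, ContinuousOn g (Set.Icc 0 1) ∧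
        (∀ s ∈ Set.Icc (0 : ℝ) 1,
          g s ^ 2 = (Real.pi : ℂ) ^ n
            / (A.map Complex.ofReal + ((s : ℂ) * Complex.I) • B.map Complex.ofReal).det) ∧
        g 0 = ((Real.sqrt (Real.pi ^ n / A.det) : ℝ) : ℂ) ∧ g 1 = d) ∧
      (∫ t : Fin n → ℝ,
          Complex.exp (- ∑ i, ∑ j, (t i : ℂ) * M i j * (t j : ℂ))) = d := by
  have hpos : ∀ s, RePosDef (complexPath A B s) := hA.rePosDef_map_ofReal.complexPath B
  have hsymm : ∀ s, (complexPath A B s).IsSymm :=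
    (isHermitian_iff_isSymm.mp hA.isHermitian).complexPath hB
  obtain rfl : M = complexPath A B 1 := by simp [hM, complexPath]
  refine ⟨(hpos 1).integrable_cexp_neg_quadForm, _, (hpos 1).sq_integral_cexp_neg_quadForm
    (hsymm 1), ⟨fun s => ∫ t, cexp (-quadForm (complexPath A B s) t),
    (continuous_integral_cexp_neg_quadForm_complexPath hA.rePosDef_map_ofReal B).continuousOn,
    fun s _ => (hpos s).sq_integral_cexp_neg_quadForm (hsymm s), ?_, rfl⟩, rfl⟩
  simpa [complexPath] using hA.integral_cexp_neg_quadForm_map_ofReal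

/-- for a complex symmetric matrix `M = A + iB` with positive
definite real part `A`, the Gaussian integral `∫ exp(−tᵀMt) dt` converges
absolutely and equals `√(πⁿ/det M)`, the square root being fixed by analytic
continuation along the path `s ↦ A + isB` from the real positive definite
matrix `A`. -/
theorem complex_gaussian_integral
    {n : ℕ} (A B : Matrix (Fin n) (Fin n) ℝ)
    (hA : A.PosDef) (hAs : A.IsSymm) (hB : B.IsSymm)
    (M : Matrix (Fin n) (Fin n) ℂ)
    (hM : M = A.map Complex.ofReal + Complex.I • B.map Complex.ofReal) :
    Integrable (fun t : Fin n → ℝ =>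
        Complex.exp (- ∑ i, ∑ j, (t i : ℂ) * M i j * (t j : ℂ))) ∧
    ∃ d : ℂ, d ^ 2 = (Real.pi : ℂ) ^ n / M.det ∧
      (∃ g : ℝ → ℂ, ContinuousOn g (Set.Icc 0 1) ∧
        (∀ s ∈ Set.Icc (0 : ℝ) 1,
          g s ^ 2 = (Real.pi : ℂ) ^ n
            / (A.map Complex.ofReal + ((s : ℂ) * Complex.I) • B.map Complex.ofReal).det) ∧
        g 0 = ((Real.sqrt (Real.pi ^ n / A.det) : ℝ) : ℂ) ∧ g 1 = d) ∧
      (∫ t : Fin n → ℝ,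
          Complex.exp (- ∑ i, ∑ j, (t i : ℂ) * M i j * (t j : ℂ))) = d :=
  complex_gaussian_integral_general A B hA hB M hM
end
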